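/- arXiv:1305.5912 — 5 statements merged into one kernel-verified Lean document; each statement's English description precedes it below -/
import Mathlib

section
/- Let α, β, γ be real numbers with 0 < α < 1 < β < γ, and set x = (1+α)/(1-α), y = (β+γ)/(γ-β), z = (2(α+βγ) - (1+α)(β+γ)) / ((1-α)(γ-β)). Then β = ((xy+z) + √(x²+y²+z²+2xyz-1)) / ((x+1)(y+1)). -/
/-!
With `D = (1 - α)(γ - β)`, the half-traces satisfy `xy + z = 2(α + βγ)/D` and
`(x + 1)(y + 1) = 4γ/D`, and the discriminant `x² + y² + z² + 2xyz - 1` is the perfect square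
`(2(βγ - α)/D)²`. Since `βγ > 1 > α`, the square root is `2(βγ - α)/D`, so the numerator is
`4βγ/D` and the quotient is `β`.
-/

namespace PairOfPants

variable {α β γ : ℝ}

theorem mul_add_eq (hα : 1 - α ≠ 0) (hβγ : γ - β ≠ 0) :
    (1 + α) / (1 - α) * ((β + γ) / (γ - β)) +
        (2 * (α + β * γ) - (1 + α) * (β + γ)) / ((1 - α) * (γ - β)) =
      2 * (α + β * γ) / ((1 - α) * (γ - β)) := by
  field_simp
  ring

theorem add_one_mul_add_one_eq (hα : 1 - α ≠ 0) (hβγ : γ - β ≠ 0) :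
    ((1 + α) / (1 - α) + 1) * ((β + γ) / (γ - β) + 1) = 4 * γ / ((1 - α) * (γ - β)) := by
  field_simp
  ring

theorem discriminant_eq_sq (hα : 1 - α ≠ 0) (hβγ : γ - β ≠ 0) :
    ((1 + α) / (1 - α)) ^ 2 + ((β + γ) / (γ - β)) ^ 2 +
        ((2 * (α + β * γ) - (1 + α) * (β + γ)) / ((1 - α) * (γ - β))) ^ 2 +
        2 * ((1 + α) / (1 - α)) * ((β + γ) / (γ - β)) *
          ((2 * (α + β * γ) - (1 + α) * (β + γ)) / ((1 - α) * (γ - β))) - 1 =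
      (2 * (β * γ - α) / ((1 - α) * (γ - β))) ^ 2 := by
  field_simp
  ring

end PairOfPants

theorem stmt_7_general (α β γ x y z : ℝ) (h1 : α < 1) (h2 : 1 < β) (h3 : β < γ)
    (hx : x = (1 + α) / (1 - α))
    (hy : y = (β + γ) / (γ - β))
    (hz : z = (2 * (α + β * γ) - (1 + α) * (β + γ)) / ((1 - α) * (γ - β))) :
    β = ((x * y + z) + Real.sqrt (x ^ 2 + y ^ 2 + z ^ 2 + 2 * x * y * z - 1)) /
        ((x + 1) * (y + 1)) := by
  have hD : 0 < (1 - α) * (γ - β) := mul_pos (by linarith) (by linarith)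
  have hα : 1 - α ≠ 0 := by linarith
  have hβγ : γ - β ≠ 0 := by linarith
  have hγ : 0 < γ := by linarith
  have hroot : 0 ≤ 2 * (β * γ - α) / ((1 - α) * (γ - β)) := by
    have : 1 < β * γ := by nlinarith
    exact div_nonneg (by linarith) hD.le
  subst hx hy hz
  rw [PairOfPants.discriminant_eq_sq hα hβγ, Real.sqrt_sq hroot, PairOfPants.mul_add_eq hα hβγ,
    PairOfPants.add_one_mul_add_one_eq hα hβγ]
  field_simp
  ring

/-- Let `0 < α < 1 < β < γ` and set `x = (1+α)/(1-α)`, `y = (β+γ)/(γ-β)`,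
`z = (2(α+βγ) - (1+α)(β+γ)) / ((1-α)(γ-β))`. Then
`β = ((xy+z) + √(x²+y²+z²+2xyz-1)) / ((x+1)(y+1))`. -/
theorem stmt_7 (α β γ x y z : ℝ) (h0 : 0 < α) (h1 : α < 1) (h2 : 1 < β) (h3 : β < γ)
    (hx : x = (1 + α) / (1 - α))
    (hy : y = (β + γ) / (γ - β))
    (hz : z = (2 * (α + β * γ) - (1 + α) * (β + γ)) / ((1 - α) * (γ - β))) :
    β = ((x * y + z) + Real.sqrt (x ^ 2 + y ^ 2 + z ^ 2 + 2 * x * y * z - 1)) /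
        ((x + 1) * (y + 1)) :=
  stmt_7_general α β γ x y z h1 h2 h3 hx hy hz
end

section
/- Let α, β, γ be real numbers with 0 < α < 1 < β < γ, and set x = (1+α)/(1-α), y = (β+γ)/(γ-β), z = (2(α+βγ) - (1+α)(β+γ)) / ((1-α)(γ-β)). Then γ = ((xy+z) + √(x²+y²+z²+2xyz-1)) / ((x+1)(y-1)). -/
/-!
Put `D = (1-α)(γ-β)`. Over the common denominator `D` everything is polynomial in `α, β, γ`:
`x² + y² + z² + 2xyz - 1` is the perfect square of `2(βγ - α)/D`, while `xy + z = 2(α + βγ)/D`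
and `(x+1)(y-1) = 4β/D`. As `βγ > 1 > α`, the square root is `2(βγ - α)/D`, so the numerator
is `4βγ/D` and the quotient is `γ`.
-/

section HalfTraces

variable {α β γ x y z : ℝ}

lemma half_trace_discriminant_eq_sq (hα : α ≠ 1) (hβγ : β ≠ γ)
    (hx : x = (1 + α) / (1 - α)) (hy : y = (β + γ) / (γ - β))
    (hz : z = (2 * (α + β * γ) - (1 + α) * (β + γ)) / ((1 - α) * (γ - β))) :
    x ^ 2 + y ^ 2 + z ^ 2 + 2 * x * y * z - 1
      = (2 * (β * γ - α) / ((1 - α) * (γ - β))) ^ 2 := by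
  have : 1 - α ≠ 0 := sub_ne_zero.2 hα.symm
  have : γ - β ≠ 0 := sub_ne_zero.2 hβγ.symm
  subst hx hy hz
  field_simp
  ring

lemma half_trace_mul_add (hα : α ≠ 1) (hβγ : β ≠ γ)
    (hx : x = (1 + α) / (1 - α)) (hy : y = (β + γ) / (γ - β))
    (hz : z = (2 * (α + β * γ) - (1 + α) * (β + γ)) / ((1 - α) * (γ - β))) :
    x * y + z = 2 * (α + β * γ) / ((1 - α) * (γ - β)) := by
  have : 1 - α ≠ 0 := sub_ne_zero.2 hα.symm
  have : γ - β ≠ 0 := sub_ne_zero.2 hβγ.symm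
  subst hx hy hz
  field_simp
  ring

lemma half_trace_add_one_mul_sub_one (hα : α ≠ 1) (hβγ : β ≠ γ)
    (hx : x = (1 + α) / (1 - α)) (hy : y = (β + γ) / (γ - β)) :
    (x + 1) * (y - 1) = 4 * β / ((1 - α) * (γ - β)) := by
  have : 1 - α ≠ 0 := sub_ne_zero.2 hα.symm
  have : γ - β ≠ 0 := sub_ne_zero.2 hβγ.symm
  subst hx hy
  field_simp
  ring

end HalfTraces

theorem stmt_8_general (α β γ x y z : ℝ) (h1 : α < 1) (h2 : 1 < β) (h3 : β < γ)
    (hx : x = (1 + α) / (1 - α))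
    (hy : y = (β + γ) / (γ - β))
    (hz : z = (2 * (α + β * γ) - (1 + α) * (β + γ)) / ((1 - α) * (γ - β))) :
    γ = ((x * y + z) + Real.sqrt (x ^ 2 + y ^ 2 + z ^ 2 + 2 * x * y * z - 1)) /
        ((x + 1) * (y - 1)) := by
  have hα : α ≠ 1 := h1.ne
  have hβγ : β ≠ γ := h3.ne
  have hD : 0 < (1 - α) * (γ - β) := mul_pos (by linarith) (by linarith)
  have hβγα : 0 < β * γ - α := by nlinarith
  rw [half_trace_discriminant_eq_sq hα hβγ hx hy hz, Real.sqrt_sq (by positivity),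
    half_trace_mul_add hα hβγ hx hy hz, half_trace_add_one_mul_sub_one hα hβγ hx hy]
  field_simp
  ring

/-- Let `0 < α < 1 < β < γ` and set `x = (1+α)/(1-α)`, `y = (β+γ)/(γ-β)`,
`z = (2(α+βγ) - (1+α)(β+γ)) / ((1-α)(γ-β))`. Then
`γ = ((xy+z) + √(x²+y²+z²+2xyz-1)) / ((x+1)(y-1))`. -/
theorem stmt_8 (α β γ x y z : ℝ) (h0 : 0 < α) (h1 : α < 1) (h2 : 1 < β) (h3 : β < γ)
    (hx : x = (1 + α) / (1 - α))
    (hy : y = (β + γ) / (γ - β))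
    (hz : z = (2 * (α + β * γ) - (1 + α) * (β + γ)) / ((1 - α) * (γ - β))) :
    γ = ((x * y + z) + Real.sqrt (x ^ 2 + y ^ 2 + z ^ 2 + 2 * x * y * z - 1)) /
        ((x + 1) * (y - 1)) :=
  stmt_8_general α β γ x y z h1 h2 h3 hx hy hz
end

section
/- Let x, y, z be real numbers, each strictly greater than 1, and define α = (x-1)/(x+1), β = ((xy+z) + √(x²+y²+z²+2xyz-1)) / ((x+1)(y+1)), γ = ((xy+z) + √(x²+y²+z²+2xyz-1)) / ((x+1)(y-1)). Then 0 < α < 1 < β < γ, and these values satisfy x = (1+α)/(1-α), y = (β+γ)/(γ-β), and z = (2(α+βγ) - (1+α)(β+γ)) / ((1-α)(γ-β)). -/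
/-!
With `D = x² + y² + z² + 2xyz - 1`, the common numerator `S = (xy + z) + √D` of `β` and `γ` is
the larger root of `u² - 2(xy + z)u + (x² - 1)(y² - 1)`, whose reduced discriminant is exactly
`D`. The formulas for `x` and `y` are Möbius inversions that hold for any `S ≠ 0`; the formula
for `z` is this quadratic relation after clearing denominators. For the inequalities, `β > 1`
amounts to `√D > x + y + 1 - z`, which follows from
`D - (x + y + 1 - z)² = 2(z - 1)(x + 1)(y + 1)`.
-/

lemma add_sqrt_isRoot_quadratic {p q : ℝ} (h : q ≤ p ^ 2) :
    (p + √(p ^ 2 - q)) ^ 2 - 2 * p * (p + √(p ^ 2 - q)) + q = 0 := by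
  linear_combination Real.sq_sqrt (sub_nonneg.mpr h)

lemma add_one_mul_add_one_lt_add_sqrt {x y z : ℝ} (hx : -1 < x) (hy : -1 < y) (hz : 1 < z) :
    (x + 1) * (y + 1) < x * y + z + √(x ^ 2 + y ^ 2 + z ^ 2 + 2 * x * y * z - 1) := by
  have hgap : x ^ 2 + y ^ 2 + z ^ 2 + 2 * x * y * z - 1 - (x + y + 1 - z) ^ 2
      = 2 * (z - 1) * (x + 1) * (y + 1) := by ring
  have hpos : 0 < 2 * (z - 1) * (x + 1) * (y + 1) :=
    mul_pos (mul_pos (by linarith) (by linarith)) (by linarith)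
  have hlt : x + y + 1 - z < √(x ^ 2 + y ^ 2 + z ^ 2 + 2 * x * y * z - 1) :=
    Real.lt_sqrt_of_sq_lt (by linarith)
  linarith

lemma mobius_ratio_eq {S a y : ℝ} (hS : S ≠ 0) (ha : a ≠ 0) (hy₁ : y + 1 ≠ 0)
    (hy₂ : y - 1 ≠ 0) :
    (S / (a * (y + 1)) + S / (a * (y - 1))) / (S / (a * (y - 1)) - S / (a * (y + 1))) = y := by
  have hsum : S / (a * (y + 1)) + S / (a * (y - 1)) = 2 * S * y / (a * ((y + 1) * (y - 1))) := by
    field_simp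
    ring
  have hdiff : S / (a * (y - 1)) - S / (a * (y + 1)) = 2 * S / (a * ((y + 1) * (y - 1))) := by
    field_simp
    ring
  rw [hsum, hdiff]
  field_simp

lemma cayley_ratio_eq {x : ℝ} (hx : x + 1 ≠ 0) :
    (1 + (x - 1) / (x + 1)) / (1 - (x - 1) / (x + 1)) = x := by
  have hsub : 1 - (x - 1) / (x + 1) = 2 / (x + 1) := by
    field_simp
    ring
  rw [hsub]
  field_simp
  ring

lemma eq_div_of_isRoot_quadratic {x y z S : ℝ} (hx : x + 1 ≠ 0) (hy₁ : y + 1 ≠ 0)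
    (hy₂ : y - 1 ≠ 0) (hS : S ≠ 0)
    (hroot : S ^ 2 - 2 * (x * y + z) * S + (x ^ 2 - 1) * (y ^ 2 - 1) = 0) :
    let α := (x - 1) / (x + 1)
    let β := S / ((x + 1) * (y + 1))
    let γ := S / ((x + 1) * (y - 1))
    z = (2 * (α + β * γ) - (1 + α) * (β + γ)) / ((1 - α) * (γ - β)) := by
  intro α β γ
  have hα : 1 - α = 2 / (x + 1) := by
    simp only [α]
    field_simp
    ring
  have hβγ : γ - β = 2 * S / ((x + 1) * ((y + 1) * (y - 1))) := by
    simp only [β, γ]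
    field_simp
    ring
  rw [hα, hβγ, eq_div_iff (by positivity)]
  simp only [α, β, γ]
  field_simp
  linear_combination (-2) * hroot

/-- Let `x, y, z > 1` and define
`α = (x-1)/(x+1)`,
`β = ((xy+z) + √(x²+y²+z²+2xyz-1)) / ((x+1)(y+1))`,
`γ = ((xy+z) + √(x²+y²+z²+2xyz-1)) / ((x+1)(y-1))`.
Then `0 < α < 1 < β < γ`, and `x = (1+α)/(1-α)`, `y = (β+γ)/(γ-β)`,
`z = (2(α+βγ) - (1+α)(β+γ)) / ((1-α)(γ-β))`. -/
theorem stmt_9 (x y z : ℝ) (hx : 1 < x) (hy : 1 < y) (hz : 1 < z)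
    (α β γ : ℝ)
    (hα : α = (x - 1) / (x + 1))
    (hβ : β = ((x * y + z) + Real.sqrt (x ^ 2 + y ^ 2 + z ^ 2 + 2 * x * y * z - 1)) /
        ((x + 1) * (y + 1)))
    (hγ : γ = ((x * y + z) + Real.sqrt (x ^ 2 + y ^ 2 + z ^ 2 + 2 * x * y * z - 1)) /
        ((x + 1) * (y - 1))) :
    (0 < α ∧ α < 1 ∧ 1 < β ∧ β < γ) ∧
    x = (1 + α) / (1 - α) ∧
    y = (β + γ) / (γ - β) ∧
    z = (2 * (α + β * γ) - (1 + α) * (β + γ)) / ((1 - α) * (γ - β)) := by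
  have hdisc : x ^ 2 + y ^ 2 + z ^ 2 + 2 * x * y * z - 1
      = (x * y + z) ^ 2 - (x ^ 2 - 1) * (y ^ 2 - 1) := by
    ring
  set S := x * y + z + √(x ^ 2 + y ^ 2 + z ^ 2 + 2 * x * y * z - 1) with hS_def
  have hS : (x + 1) * (y + 1) < S := add_one_mul_add_one_lt_add_sqrt (by linarith) (by linarith) hz
  have hroot : S ^ 2 - 2 * (x * y + z) * S + (x ^ 2 - 1) * (y ^ 2 - 1) = 0 := by
    rw [hS_def, hdisc]
    refine add_sqrt_isRoot_quadratic ?_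
    rw [← sub_nonneg, ← hdisc]
    nlinarith [mul_pos (mul_pos (zero_lt_one.trans hx) (zero_lt_one.trans hy))
      (zero_lt_one.trans hz)]
  have hx₁ : 0 < x + 1 := by linarith
  have hy₁ : 0 < y + 1 := by linarith
  have hy₂ : 0 < y - 1 := by linarith
  have hS₀ : 0 < S := (mul_pos hx₁ hy₁).trans hS
  subst hα hβ hγ
  refine ⟨⟨div_pos (by linarith) hx₁, (div_lt_one hx₁).mpr (by linarith),
    (one_lt_div (mul_pos hx₁ hy₁)).mpr hS,
    div_lt_div_of_pos_left hS₀ (mul_pos hx₁ hy₂)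
      (mul_lt_mul_of_pos_left (by linarith) hx₁)⟩,
    (cayley_ratio_eq hx₁.ne').symm,
    (mobius_ratio_eq hS₀.ne' hx₁.ne' hy₁.ne' hy₂.ne').symm,
    eq_div_of_isRoot_quadratic hx₁.ne' hy₁.ne' hy₂.ne' hS₀.ne' hroot⟩
end

section
/- The map Φ sending a triple (α, β, γ) of real numbers satisfying 0 < α < 1 < β < γ to the triple (x, y, z) = ((1+α)/(1-α), (β+γ)/(γ-β), (2(α+βγ) - (1+α)(β+γ)) / ((1-α)(γ-β))) is a bijection from the set {(α, β, γ) ∈ ℝ³ : 0 < α < 1 < β < γ} onto the set {(x, y, z) ∈ ℝ³ : x > 1, y > 1, z > 1}. -/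
/-!
The half-trace `x` determines `α`, and `y` determines the ratio `β : γ`, so
`(α, β, γ) ↦ (x, y, γ - β)` is a bijection onto `{x > 1, y > 1, γ - β > 2 / (y - 1)}`.
For fixed `x, y` the third half-trace is `z = A / d + B d - x y` in the scale `d = γ - β`, with
`A = x - 1` and `B = (x + 1)(y² - 1) / 4`. The constraint `β > 1` puts `d` beyond the minimum
`√(A / B)` of this convex function, where it increases strictly from `1` (at `d = 2 / (y - 1)`)
to `∞`.
-/

open Set

theorem Set.bijOn_prod_fiberwise {α β γ : Type*} {S : Set α} {s : α → Set β} {t : α → Set γ}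
    {g : α → β → γ} (h : ∀ a ∈ S, BijOn (g a) (s a) (t a)) :
    BijOn (fun p : α × β => (p.1, g p.1 p.2))
      {p | p.1 ∈ S ∧ p.2 ∈ s p.1} {p | p.1 ∈ S ∧ p.2 ∈ t p.1} := by
  refine ⟨fun p ⟨ha, hb⟩ => ⟨ha, (h _ ha).mapsTo hb⟩, ?_, ?_⟩
  · rintro ⟨a, b⟩ ⟨ha, hb⟩ ⟨a', b'⟩ ⟨-, hb'⟩ heq
    obtain ⟨rfl, hg⟩ := Prod.mk.inj heq
    exact Prod.ext rfl ((h a ha).injOn hb hb' hg)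
  · rintro ⟨a, c⟩ ⟨ha, hc⟩
    obtain ⟨b, hb, rfl⟩ := (h a ha).surjOn hc
    exact ⟨(a, b), ⟨ha, hb⟩, rfl⟩

theorem strictMonoOn_div_add_mul {A B d₀ : ℝ} (hB : 0 < B) (hd₀ : 0 < d₀)
    (hAB : A ≤ B * d₀ ^ 2) : StrictMonoOn (fun d => A / d + B * d) (Ici d₀) := by
  intro d (hd : d₀ ≤ d) d' (hd' : d₀ ≤ d') hlt
  have hd_pos : 0 < d := hd₀.trans_le hd
  have hd'_pos : 0 < d' := hd_pos.trans hlt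
  have hA : A < B * (d * d') := hAB.trans_lt (by gcongr; nlinarith)
  show A / d + B * d < A / d' + B * d'
  rw [div_add' _ _ _ hd_pos.ne', div_add' _ _ _ hd'_pos.ne', div_lt_div_iff₀ hd_pos hd'_pos]
  nlinarith [mul_lt_mul_of_pos_left hA (sub_pos.2 hlt)]

theorem bijOn_div_add_mul_sub_Ioi {A B d₀ : ℝ} (c : ℝ) (hA : 0 ≤ A) (hB : 0 < B) (hd₀ : 0 < d₀)
    (hAB : A ≤ B * d₀ ^ 2) :
    BijOn (fun d => A / d + B * d - c) (Ioi d₀) (Ioi (A / d₀ + B * d₀ - c)) := by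
  have hmono : StrictMonoOn (fun d => A / d + B * d - c) (Ici d₀) := fun d hd d' hd' hlt =>
    sub_lt_sub_right (strictMonoOn_div_add_mul hB hd₀ hAB hd hd' hlt) c
  refine ⟨fun d hd => hmono self_mem_Ici (Ioi_subset_Ici_self hd) hd,
    hmono.injOn.mono Ioi_subset_Ici_self, ?_⟩
  intro w (hw : _ < w)
  set d₁ := (w + c) / B
  have hd₀₁ : d₀ ≤ d₁ := by
    rw [le_div_iff₀ hB]; nlinarith [div_nonneg hA hd₀.le]
  have hcont : ContinuousOn (fun d => A / d + B * d - c) (Icc d₀ d₁) :=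
    ((continuousOn_const.div continuousOn_id fun d hd => (hd₀.trans_le hd.1).ne').add
      (by fun_prop)).sub continuousOn_const
  have hw₁ : w ≤ A / d₁ + B * d₁ - c := by
    have : 0 ≤ A / d₁ := div_nonneg hA (hd₀.le.trans hd₀₁)
    rw [mul_div_cancel₀ _ hB.ne']; linarith
  obtain ⟨d, hd, hfd⟩ := intermediate_value_Icc hd₀₁ hcont ⟨hw.le, hw₁⟩
  refine ⟨d, lt_of_le_of_ne hd.1 ?_, hfd⟩
  rintro rfl
  exact hw.ne hfd

theorem bijOn_one_add_div_one_sub :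
    BijOn (fun a : ℝ => (1 + a) / (1 - a)) (Ioo 0 1) (Ioi 1) := by
  refine InvOn.bijOn (f' := fun x => (x - 1) / (x + 1)) ⟨?_, ?_⟩ ?_ ?_
  · rintro a ⟨-, ha⟩
    have : 1 - a ≠ 0 := by linarith
    field_simp
    ring
  · intro x (hx : 1 < x)
    have : x + 1 ≠ 0 := by linarith
    field_simp
    ring
  · rintro a ⟨ha₀, ha₁⟩
    exact (one_lt_div (sub_pos.2 ha₁)).2 (by linarith)
  · intro x (hx : 1 < x)
    exact ⟨div_pos (by linarith) (by linarith), (div_lt_one (by linarith)).2 (by linarith)⟩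

theorem bijOn_add_div_sub_sub :
    BijOn (fun p : ℝ × ℝ => ((p.1 + p.2) / (p.2 - p.1), p.2 - p.1))
      {p | 1 < p.1 ∧ p.1 < p.2} {q | 1 < q.1 ∧ 2 / (q.1 - 1) < q.2} := by
  refine InvOn.bijOn (f' := fun q => ((q.1 - 1) * q.2 / 2, (q.1 + 1) * q.2 / 2)) ⟨?_, ?_⟩ ?_ ?_
  · rintro ⟨b, c⟩ ⟨-, hbc⟩
    have : c - b ≠ 0 := by linarith
    ext <;> field_simp <;> ring
  · rintro ⟨y, d⟩ ⟨hy, hd⟩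
    have : d ≠ 0 := ((div_pos two_pos (sub_pos.2 hy)).trans hd).ne'
    ext <;> field_simp <;> ring
  · rintro ⟨b, c⟩ ⟨hb, hbc⟩
    have hcb : 0 < c - b := by linarith
    have hy : (b + c) / (c - b) - 1 = 2 * b / (c - b) := by field_simp; ring
    refine ⟨(one_lt_div hcb).2 (by linarith), ?_⟩
    rw [hy, div_div_eq_mul_div, div_lt_iff₀ (by linarith)]
    nlinarith
  · rintro ⟨y, d⟩ ⟨hy, hd⟩
    rw [div_lt_iff₀ (sub_pos.2 hy)] at hd
    constructor <;> dsimp only <;> nlinarith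

/-- The half-trace `z` as a function of `x`, `y` and the scale `d = γ - β`. -/
noncomputable def halfTraceOfScale (x y d : ℝ) : ℝ :=
  (x - 1) / d + (x + 1) * (y ^ 2 - 1) / 4 * d - x * y

theorem bijOn_halfTraceOfScale {x y : ℝ} (hx : 1 < x) (hy : 1 < y) :
    BijOn (halfTraceOfScale x y) (Ioi (2 / (y - 1))) (Ioi 1) := by
  have hy₁ : 0 < y - 1 := sub_pos.2 hy
  have hAB : x - 1 ≤ (x + 1) * (y ^ 2 - 1) / 4 * (2 / (y - 1)) ^ 2 := by
    rw [div_pow, mul_div_assoc', le_div_iff₀ (by positivity)]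
    nlinarith [mul_pos hy₁ hy₁, mul_pos (mul_pos hy₁ hy₁) hy₁]
  have hval :
      (x - 1) / (2 / (y - 1)) + (x + 1) * (y ^ 2 - 1) / 4 * (2 / (y - 1)) - x * y = 1 := by
    field_simp
    ring
  have h := bijOn_div_add_mul_sub_Ioi (x * y) (sub_nonneg.2 hx.le)
    (div_pos (mul_pos (by linarith) (by nlinarith)) four_pos) (div_pos two_pos hy₁) hAB
  rwa [hval] at h

/-- The map `Φ : (α, β, γ) ↦ (x, y, z)` defined by
`x = (1+α)/(1-α)`, `y = (β+γ)/(γ-β)`, `z = (2(α+βγ) - (1+α)(β+γ)) / ((1-α)(γ-β))`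
is a bijection from `{(α, β, γ) : 0 < α < 1 < β < γ}` onto
`{(x, y, z) : x > 1, y > 1, z > 1}`. -/
theorem stmt_10 :
    Set.BijOn
      (fun p : ℝ × ℝ × ℝ =>
        ((1 + p.1) / (1 - p.1),
         (p.2.1 + p.2.2) / (p.2.2 - p.2.1),
         (2 * (p.1 + p.2.1 * p.2.2) - (1 + p.1) * (p.2.1 + p.2.2)) /
           ((1 - p.1) * (p.2.2 - p.2.1))))
      {p : ℝ × ℝ × ℝ | 0 < p.1 ∧ p.1 < 1 ∧ 1 < p.2.1 ∧ p.2.1 < p.2.2}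
      {q : ℝ × ℝ × ℝ | 1 < q.1 ∧ 1 < q.2.1 ∧ 1 < q.2.2} := by
  have hG : BijOn (fun q : ℝ × ℝ × ℝ => (q.1, q.2.1, halfTraceOfScale q.1 q.2.1 q.2.2))
      {q | q.1 ∈ Ioi 1 ∧ q.2 ∈ {p : ℝ × ℝ | p.1 ∈ Ioi 1 ∧ p.2 ∈ Ioi (2 / (p.1 - 1))}}
      {q | q.1 ∈ Ioi 1 ∧ q.2 ∈ {p : ℝ × ℝ | p.1 ∈ Ioi 1 ∧ p.2 ∈ Ioi 1}} :=
    bijOn_prod_fiberwise (g := fun x (p : ℝ × ℝ) => (p.1, halfTraceOfScale x p.1 p.2)) fun _ hx =>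
      bijOn_prod_fiberwise fun _ hy => bijOn_halfTraceOfScale hx hy
  have hS : {p : ℝ × ℝ × ℝ | 0 < p.1 ∧ p.1 < 1 ∧ 1 < p.2.1 ∧ p.2.1 < p.2.2} =
      Ioo 0 1 ×ˢ {p | 1 < p.1 ∧ p.1 < p.2} := ext fun _ => and_assoc.symm
  rw [hS]
  refine (hG.comp (bijOn_one_add_div_one_sub.prodMap bijOn_add_div_sub_sub)).congr ?_
  rintro ⟨α, β, γ⟩ ⟨⟨-, hα⟩, -, hβγ⟩
  have : 1 - α ≠ 0 := by linarith
  have : γ - β ≠ 0 := by linarith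
  simp only [Function.comp, halfTraceOfScale, Prod.mk.injEq, true_and]
  field_simp
  ring
end

section
/- For all real numbers x, y, z each strictly greater than 1, the identity x² + y² + z² + 2xyz - 1 = (x + y + 1 - z)² + 2(z-1)(x+1)(y+1) holds; consequently x² + y² + z² + 2xyz - 1 > (x + y + 1 - z)², and therefore ((xy+z) + √(x²+y²+z²+2xyz-1)) / ((x+1)(y+1)) > 1. -/
/-!
Completing the square in `x + y + 1 - z` leaves the term `2(z-1)(x+1)(y+1)`, which is positive
for `z > 1` and `x, y > -1`. Hence `√(x² + y² + z² + 2xyz - 1) > |x + y + 1 - z| ≥ x + y + 1 - z`,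
which after adding `xy + z` to both sides is `β > 1`, since `(x+1)(y+1) = xy + x + y + 1`.
-/

theorem sq_add_sq_add_sq_add_two_mul_mul_mul_sub_one_eq {R : Type*} [CommRing R] (x y z : R) :
    x ^ 2 + y ^ 2 + z ^ 2 + 2 * x * y * z - 1
      = (x + y + 1 - z) ^ 2 + 2 * (z - 1) * (x + 1) * (y + 1) := by
  ring

theorem sq_add_add_sub_lt_sq_add_sq_add_sq_add_two_mul_mul_mul_sub_one {R : Type*} [CommRing R]
    [LinearOrder R] [IsStrictOrderedRing R] {x y z : R} (hx : -1 < x) (hy : -1 < y) (hz : 1 < z) :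
    (x + y + 1 - z) ^ 2 < x ^ 2 + y ^ 2 + z ^ 2 + 2 * x * y * z - 1 := by
  have hpos : 0 < 2 * (z - 1) * (x + 1) * (y + 1) := by
    have := sub_pos.2 hz
    have := neg_lt_iff_pos_add.1 hx
    have := neg_lt_iff_pos_add.1 hy
    positivity
  rw [sq_add_sq_add_sq_add_two_mul_mul_mul_sub_one_eq]
  exact lt_add_of_pos_right _ hpos

/-- For all reals `x, y, z > 1`:
`x² + y² + z² + 2xyz - 1 = (x + y + 1 - z)² + 2(z-1)(x+1)(y+1)`;
consequently `x² + y² + z² + 2xyz - 1 > (x + y + 1 - z)²`, and therefore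
`((xy+z) + √(x²+y²+z²+2xyz-1)) / ((x+1)(y+1)) > 1`. -/
theorem stmt_11 (x y z : ℝ) (hx : 1 < x) (hy : 1 < y) (hz : 1 < z) :
    x ^ 2 + y ^ 2 + z ^ 2 + 2 * x * y * z - 1
      = (x + y + 1 - z) ^ 2 + 2 * (z - 1) * (x + 1) * (y + 1) ∧
    (x + y + 1 - z) ^ 2 < x ^ 2 + y ^ 2 + z ^ 2 + 2 * x * y * z - 1 ∧
    1 < ((x * y + z) + Real.sqrt (x ^ 2 + y ^ 2 + z ^ 2 + 2 * x * y * z - 1)) /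
        ((x + 1) * (y + 1)) := by
  have hlt := sq_add_add_sub_lt_sq_add_sq_add_sq_add_two_mul_mul_mul_sub_one
    (by linarith : -1 < x) (by linarith : -1 < y) hz
  refine ⟨sq_add_sq_add_sq_add_two_mul_mul_mul_sub_one_eq x y z, hlt, ?_⟩
  have hden : 0 < (x + 1) * (y + 1) := mul_pos (by linarith) (by linarith)
  have hsqrt := Real.lt_sqrt_of_sq_lt hlt
  rw [one_lt_div hden]
  linarith
end
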